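/- For a Fitch map ε and integer k ≥ 1, the following are equivalent: (1) ε is a k-restricted Fitch map; (2) every edge e of the ε-tree T_ε satisfies |λ̂(e)| ≤ k; (3) ε satisfies the k-edge-label condition: for every N ∈ N[ε] with N ≠ X, |{ m ∈ M : ∃ y ∈ X with N = N_{¬m}[y] }| ≤ k. -/
import Mathlib


/-- A finite rooted phylogenetic tree on leaf set `X`, with vertex type `V`.
Vertices are encoded via a parent function; `par root = root`. -/
structure PhyloTree (V X : Type) : Type where
  fin : Finite V
  root : V
  par : V → V
  par_root : par root = root
  reach : ∀ v : V, ∃ n : ℕ, par^[n] v = root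
  leaf : X → V
  leaf_inj : Function.Injective leaf
  leaf_isLeaf : ∀ (x : X) (u : V), par u = leaf x → u = leaf x
  leaf_only : ∀ v : V, (∀ u : V, par u = v → u = v) → ∃ x : X, leaf x = v
  root_deg : (∃ x : X, leaf x = root) ∨ 2 ≤ {u : V | par u = root ∧ u ≠ root}.ncard
  inner_deg : ∀ v : V, v ≠ root → (¬ ∃ x : X, leaf x = v) →
      2 ≤ {u : V | par u = v ∧ u ≠ v}.ncard

namespace PhyloTree

variable {V X : Type}

/-- `T.anc u v` : `u` is an ancestor of `v`, i.e. `u ⪯_T v`. -/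
def anc (T : PhyloTree V X) (u v : V) : Prop := ∃ n : ℕ, T.par^[n] v = u

/-- `l` is the last common ancestor of `a` and `b`. -/
def IsLca (T : PhyloTree V X) (l a b : V) : Prop :=
  T.anc l a ∧ T.anc l b ∧ ∀ u : V, T.anc u a → T.anc u b → T.anc u l

/-- The cluster of `v`: the set of leaves below `v`. -/
def cluster (T : PhyloTree V X) (v : V) : Set X := {x : X | T.anc v (T.leaf x)}

/-- The cluster set `C(T)`. -/
def clusterSet (T : PhyloTree V X) : Set (Set X) := {S : Set X | ∃ v : V, S = T.cluster v}

/-- The edge `(par u, u)` lies on the descending path from `a` down to `b`. -/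
def edgeOnDown (T : PhyloTree V X) (a b u : V) : Prop :=
  T.anc a u ∧ u ≠ a ∧ T.anc u b

/-- The edge `(par u, u)` lies on the unique path between `v` and `w`. -/
def edgeOnPath (T : PhyloTree V X) (v w u : V) : Prop :=
  ∃ l : V, T.IsLca l v w ∧ (T.edgeOnDown l v u ∨ T.edgeOnDown l w u)

/-- `T` displays the rooted triple `ab|c`. -/
def Displays (T : PhyloTree V X) (a b c : X) : Prop :=
  ∃ l3 l2 : V, T.IsLca l2 (T.leaf a) (T.leaf b) ∧
    T.IsLca l3 l2 (T.leaf c) ∧ l3 ≠ l2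

end PhyloTree

/-- `(T, lab)` explains `ε` : for distinct leaves `x,y`, `m ∈ ε x y` iff there is an
`m`-edge on the path from `lca(x,y)` down to `y`. -/
def Explains {V X M : Type} (T : PhyloTree V X) (lab : V → Set M)
    (ε : X → X → Set M) : Prop :=
  ∀ x y : X, x ≠ y → ∀ m : M,
    (m ∈ ε x y ↔ ∃ l : V, T.IsLca l (T.leaf x) (T.leaf y) ∧
      ∃ u : V, T.edgeOnDown l (T.leaf y) u ∧ m ∈ lab u)

/-- `ε` is a Fitch map: it is explained by some edge-labeled phylogenetic tree. -/
def IsFitchMap {X M : Type} (ε : X → X → Set M) : Prop :=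
  ∃ (V : Type) (T : PhyloTree V X) (lab : V → Set M), Explains T lab ε

/-- The complementary neighborhood `N_{¬m}[y]`. -/
def Nbr {X M : Type} (ε : X → X → Set M) (m : M) (y : X) : Set X :=
  {x : X | x ≠ y ∧ m ∉ ε x y} ∪ {y}

/-- The collection `N[ε]` of all complementary neighborhoods. -/
def NbrSet {X M : Type} (ε : X → X → Set M) : Set (Set X) :=
  {N : Set X | ∃ (m : M) (y : X), N = Nbr ε m y}

/-- A set system is hierarchy-like if any two members intersect in `∅` or one of them. -/
def HLike {X : Type} (H : Set (Set X)) : Prop :=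
  ∀ P ∈ H, ∀ Q ∈ H, P ∩ Q = P ∨ P ∩ Q = Q ∨ P ∩ Q = ∅

/-- The inequality condition (IC). -/
def IneqCond {X M : Type} (ε : X → X → Set M) : Prop :=
  ∀ (m : M) (y y' : X), y' ∈ Nbr ε m y → (Nbr ε m y').ncard ≤ (Nbr ε m y).ncard


/-- `(T, lab)` is (a representative of) the ε-tree `T_ε`. -/
def IsEpsTree {V X M : Type} (T : PhyloTree V X) (lab : V → Set M)
    (ε : X → X → Set M) : Prop :=
  T.clusterSet = NbrSet ε ∪ {Set.univ} ∪ {S : Set X | ∃ x : X, S = {x}} ∧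
  ∀ v : V, v ≠ T.root → lab v = {m : M | ∃ y : X, T.cluster v = Nbr ε m y}

/-- `ε` is a `k`-restricted Fitch map. -/
def KRestricted {X M : Type} (ε : X → X → Set M) (k : ℕ) : Prop :=
  ∃ (V : Type) (T : PhyloTree V X) (lab : V → Set M),
    Explains T lab ε ∧ ∀ v : V, v ≠ T.root → (lab v).ncard ≤ k

/-- The `k`-edge-label condition (`k`-ELC). -/
def KELC {X M : Type} (ε : X → X → Set M) (k : ℕ) : Prop :=
  ∀ N ∈ NbrSet ε, N ≠ (Set.univ : Set X) →
    {m : M | ∃ y : X, N = Nbr ε m y}.ncard ≤ k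


namespace PhyloTree

variable {V X : Type} (T : PhyloTree V X)

lemma anc_refl (v : V) : T.anc v v := ⟨0, rfl⟩

lemma anc_par (v : V) : T.anc (T.par v) v := ⟨1, rfl⟩

lemma anc_trans {u v w : V} (h1 : T.anc u v) (h2 : T.anc v w) : T.anc u w := by
  obtain ⟨n, hn⟩ := h1; obtain ⟨m, hm⟩ := h2
  exact ⟨n + m, by rw [Function.iterate_add_apply, hm, hn]⟩

lemma iterate_root (n : ℕ) : T.par^[n] T.root = T.root := by
  induction n with
  | zero => rfl
  | succ n ih => rw [Function.iterate_succ_apply, T.par_root, ih]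

lemma anc_root (v : V) : T.anc T.root v := T.reach v

lemma eq_root_of_anc {v : V} (h : T.anc v T.root) : v = T.root := by
  obtain ⟨n, hn⟩ := h; rw [T.iterate_root] at hn; exact hn.symm

lemma anc_antisymm {u v : V} (h1 : T.anc u v) (h2 : T.anc v u) : u = v := by
  obtain ⟨a, ha⟩ := h1; obtain ⟨b, hb⟩ := h2
  rcases Nat.eq_zero_or_pos (a + b) with h0 | hpos
  · have ha0 : a = 0 := by omega
    subst ha0; exact ha.symm
  · have hcyc1 : T.par^[a + b] u = u := by
      rw [Function.iterate_add_apply, hb, ha]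
    have hcyc : ∀ k : ℕ, T.par^[k * (a + b)] u = u := by
      intro k; induction k with
      | zero => simp
      | succ k ih => rw [Nat.succ_mul, Function.iterate_add_apply, hcyc1, ih]
    obtain ⟨n, hn⟩ := T.reach u
    have hle : n ≤ n * (a + b) := Nat.le_mul_of_pos_right n hpos
    have huroot : u = T.root := by
      conv_lhs => rw [← hcyc n]
      rw [← Nat.sub_add_cancel hle, Function.iterate_add_apply, hn, T.iterate_root]
    have hvroot : v = T.root := by
      rw [← hb, huroot, T.iterate_root]
    rw [huroot, hvroot]

lemma anc_comparable {u v w : V} (h1 : T.anc u w) (h2 : T.anc v w) :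
    T.anc u v ∨ T.anc v u := by
  obtain ⟨n, hn⟩ := h1; obtain ⟨m, hm⟩ := h2
  rcases le_total n m with h | h
  · right
    exact ⟨m - n, by rw [← hn, ← Function.iterate_add_apply, Nat.sub_add_cancel h, hm]⟩
  · left
    exact ⟨n - m, by rw [← hm, ← Function.iterate_add_apply, Nat.sub_add_cancel h, hn]⟩

lemma cluster_subset_of_anc {u v : V} (h : T.anc u v) : T.cluster v ⊆ T.cluster u :=
  fun _ hx => T.anc_trans h hx

lemma cluster_root : T.cluster T.root = Set.univ :=
  Set.eq_univ_of_forall fun x => T.anc_root (T.leaf x)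

lemma anc_leaf_eq {x : X} {w : V} (h : T.anc (T.leaf x) w) : w = T.leaf x := by
  obtain ⟨n, hn⟩ := h
  induction n generalizing w with
  | zero => exact hn
  | succ n ih =>
    rw [Function.iterate_succ_apply] at hn
    exact T.leaf_isLeaf x w (ih hn)

lemma cluster_leaf (x : X) : T.cluster (T.leaf x) = {x} := by
  ext x'
  constructor
  · intro hx'
    have := T.anc_leaf_eq hx'
    exact T.leaf_inj this
  · rintro rfl
    exact T.anc_refl _

lemma exists_leaf_below (v : V) : ∃ x : X, T.anc v (T.leaf x) := by
  have hfin := T.fin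
  classical
  suffices H : ∀ n : ℕ, ∀ v : V, ({u : V | T.anc v u}).ncard ≤ n → ∃ x, T.anc v (T.leaf x) from
    H _ v le_rfl
  intro n
  induction n with
  | zero =>
    intro v hv
    exfalso
    have h1 : 0 < ({u : V | T.anc v u}).ncard :=
      (Set.ncard_pos (Set.toFinite _)).mpr ⟨v, T.anc_refl v⟩
    omega
  | succ n ih =>
    intro v hv
    by_cases hc : ∀ u : V, T.par u = v → u = v
    · obtain ⟨x, hx⟩ := T.leaf_only v hc
      exact ⟨x, hx ▸ T.anc_refl _⟩
    · push_neg at hc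
      obtain ⟨u, hu, hune⟩ := hc
      have hanc : T.anc v u := ⟨1, by simpa using hu⟩
      have hss : {w : V | T.anc u w} ⊂ {w : V | T.anc v w} := by
        constructor
        · exact fun w hw => T.anc_trans hanc hw
        · intro hsup
          have : T.anc u v := hsup (T.anc_refl v)
          exact hune (T.anc_antisymm this hanc)
      have hlt := Set.ncard_lt_ncard hss (Set.toFinite _)
      obtain ⟨x, hx⟩ := ih u (by omega)
      exact ⟨x, T.anc_trans hanc hx⟩

lemma cluster_nonempty (v : V) : (T.cluster v).Nonempty := T.exists_leaf_below v

lemma exists_child {u v : V} (h : T.anc u v) (hne : u ≠ v) :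
    ∃ c : V, T.par c = u ∧ c ≠ u ∧ T.anc c v := by
  classical
  obtain ⟨n, hn⟩ := h
  have hex : ∃ n, T.par^[n] v = u := ⟨n, hn⟩
  set n₀ := Nat.find hex with hn₀
  have hfind : T.par^[n₀] v = u := Nat.find_spec hex
  have hn₀pos : 0 < n₀ := by
    rcases Nat.eq_zero_or_pos n₀ with h0 | h0
    · exfalso; apply hne; rw [← hfind, h0]; rfl
    · exact h0
  refine ⟨T.par^[n₀ - 1] v, ?_, ?_, ⟨n₀ - 1, rfl⟩⟩
  · have hstep : T.par^[n₀ - 1 + 1] v = u := by rw [Nat.sub_add_cancel hn₀pos]; exact hfind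
    rw [Function.iterate_succ_apply'] at hstep
    exact hstep
  · intro hcu
    exact Nat.find_min hex (by omega : n₀ - 1 < n₀) hcu

lemma children_eq_of_anc {u c1 c2 : V} (h1 : T.par c1 = u) (h2 : T.par c2 = u)
    (hc1 : c1 ≠ u) (h : T.anc c1 c2) : c1 = c2 := by
  obtain ⟨j, hj⟩ := h
  cases j with
  | zero => exact hj.symm
  | succ n =>
    exfalso
    rw [Function.iterate_succ_apply, h2] at hj
    have hanc1 : T.anc c1 u := ⟨n, hj⟩
    have hanc2 : T.anc u c1 := ⟨1, by simpa using h1⟩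
    exact hc1 (T.anc_antisymm hanc1 hanc2)

lemma two_children {u : V} (hleaf : ¬ ∃ x : X, T.leaf x = u) :
    2 ≤ {c : V | T.par c = u ∧ c ≠ u}.ncard := by
  by_cases hr : u = T.root
  · subst hr
    rcases T.root_deg with h | h
    · exact absurd h hleaf
    · exact h
  · exact T.inner_deg u hr hleaf

lemma cluster_strict_anc {u v : V} (hanc : T.anc u v) (hne : u ≠ v)
    (hcl : T.cluster u = T.cluster v) : False := by
  have hfin := T.fin
  classical
  by_cases hleaf : ∃ x : X, T.leaf x = u
  · obtain ⟨x, hx⟩ := hleaf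
    subst hx
    exact hne (T.anc_leaf_eq hanc).symm
  · have h2 := T.two_children hleaf
    obtain ⟨c1, hc1p, hc1ne, hc1anc⟩ := T.exists_child hanc hne
    have h2' : 1 < {c : V | T.par c = u ∧ c ≠ u}.ncard := by omega
    rw [Set.one_lt_ncard (Set.toFinite _)] at h2'
    obtain ⟨a, ha, b, hb, hab⟩ := h2'
    have hc2 : ∃ c2 : V, (T.par c2 = u ∧ c2 ≠ u) ∧ c2 ≠ c1 := by
      by_cases hac : a = c1
      · exact ⟨b, hb, by rw [← hac]; exact fun h => hab h.symm⟩
      · exact ⟨a, ha, hac⟩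
    obtain ⟨c2, ⟨hc2p, hc2ne⟩, hc21⟩ := hc2
    obtain ⟨x2, hx2⟩ := T.exists_leaf_below c2
    have hx2u : x2 ∈ T.cluster u := T.anc_trans ⟨1, by simpa using hc2p⟩ hx2
    rw [hcl] at hx2u
    have hcomp : T.anc c2 v ∨ T.anc v c2 := T.anc_comparable hx2 hx2u
    rcases hcomp with hcv | hvc
    · rcases T.anc_comparable hc1anc hcv with h12 | h21
      · exact hc21 (T.children_eq_of_anc hc1p hc2p hc1ne h12).symm
      · exact hc21 (T.children_eq_of_anc hc2p hc1p hc2ne h21)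
    · have h12 : T.anc c1 c2 := T.anc_trans hc1anc hvc
      exact hc21 (T.children_eq_of_anc hc1p hc2p hc1ne h12).symm

lemma cluster_inj : Function.Injective T.cluster := by
  intro u v h
  by_contra hne
  obtain ⟨x, hx⟩ := T.exists_leaf_below u
  have hx' : T.anc v (T.leaf x) := by
    have : x ∈ T.cluster u := hx
    rw [h] at this
    exact this
  rcases T.anc_comparable hx hx' with hc | hc
  · exact T.cluster_strict_anc hc hne h
  · exact T.cluster_strict_anc hc (Ne.symm hne) h.symm

lemma eq_root_of_cluster_univ {v : V} (h : T.cluster v = Set.univ) : v = T.root :=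
  T.cluster_inj (h.trans T.cluster_root.symm)

lemma exists_isLca (a b : V) : ∃ l : V, T.IsLca l a b := by
  have hfin := T.fin
  have hfinX : Finite X := Finite.of_injective T.leaf T.leaf_inj
  classical
  obtain ⟨l, hl, hmin⟩ := Set.exists_min_image {u : V | T.anc u a ∧ T.anc u b}
    (fun u => (T.cluster u).ncard) (Set.toFinite _) ⟨T.root, T.anc_root a, T.anc_root b⟩
  refine ⟨l, hl.1, hl.2, fun u hua hub => ?_⟩
  rcases T.anc_comparable hua hl.1 with hc | hc
  · exact hc
  · have heq := Set.eq_of_subset_of_ncard_le (T.cluster_subset_of_anc hc)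
      (hmin u ⟨hua, hub⟩) (Set.toFinite _)
    rw [T.cluster_inj heq]
    exact T.anc_refl l

end PhyloTree

section FitchAux

variable {V X M : Type}

/-- The set of `m`-edges (identified by their lower vertex) above the leaf `y`. -/
def MEdges (T : PhyloTree V X) (lab : V → Set M) (m : M) (y : X) : Set V :=
  {u : V | m ∈ lab u ∧ u ≠ T.root ∧ T.anc u (T.leaf y)}

lemma edge_ne_root (T : PhyloTree V X) {l w u : V} (h : T.edgeOnDown l w u) :
    u ≠ T.root := by
  intro hu
  have := T.eq_root_of_anc (hu ▸ h.1)
  exact h.2.1 (hu.trans this.symm)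

lemma exists_min_medge (T : PhyloTree V X) {lab : V → Set M} {m : M} {y : X}
    (hne : (MEdges T lab m y).Nonempty) :
    ∃ v₀ ∈ MEdges T lab m y, ∀ u ∈ MEdges T lab m y, T.anc u v₀ := by
  have hfin := T.fin
  have hfinX : Finite X := Finite.of_injective T.leaf T.leaf_inj
  classical
  obtain ⟨v₀, h₀, hmin⟩ := Set.exists_min_image (MEdges T lab m y)
    (fun u => (T.cluster u).ncard) (Set.toFinite _) hne
  refine ⟨v₀, h₀, fun u hu => ?_⟩
  rcases T.anc_comparable h₀.2.2 hu.2.2 with hc | hc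
  · have heq := Set.eq_of_subset_of_ncard_le (T.cluster_subset_of_anc hc)
      (hmin u hu) (Set.toFinite _)
    rw [T.cluster_inj heq]
    exact T.anc_refl _
  · exact hc

lemma nbr_eq_cluster {T : PhyloTree V X} {lab : V → Set M} {ε : X → X → Set M}
    (hex : Explains T lab ε) {m : M} {y : X} {v₀ : V} (h₀ : v₀ ∈ MEdges T lab m y)
    (hmin : ∀ u ∈ MEdges T lab m y, T.anc u v₀) : Nbr ε m y = T.cluster v₀ := by
  ext x
  by_cases hxy : x = y
  · subst hxy
    simp only [Nbr, Set.mem_union, Set.mem_singleton_iff, Set.mem_setOf_eq]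
    constructor
    · intro _; exact h₀.2.2
    · intro _; exact Or.inr trivial
  · constructor
    · intro hx
      have hm : m ∉ ε x y := by
        rcases hx with h' | h'
        · exact h'.2
        · exact absurd h' hxy
      by_contra hax
      obtain ⟨l, hlca⟩ := T.exists_isLca (T.leaf x) (T.leaf y)
      apply hm
      rw [hex x y hxy m]
      refine ⟨l, hlca, v₀, ⟨?_, ?_, h₀.2.2⟩, h₀.1⟩
      · rcases T.anc_comparable h₀.2.2 hlca.2.1 with hc | hc
        · exact absurd (T.anc_trans hc hlca.1) hax
        · exact hc
      · intro heq
        exact hax (heq ▸ hlca.1)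
    · intro hx
      left
      refine ⟨hxy, fun hm => ?_⟩
      rw [hex x y hxy m] at hm
      obtain ⟨l, hlca, u, ⟨hlu, hul, huy⟩, hmu⟩ := hm
      have huroot : u ≠ T.root := edge_ne_root T ⟨hlu, hul, huy⟩
      have humem : u ∈ MEdges T lab m y := ⟨hmu, huroot, huy⟩
      have h1 : T.anc u v₀ := hmin u humem
      have h2 : T.anc v₀ l := hlca.2.2 v₀ hx h₀.2.2
      have h3 : T.anc l v₀ := T.anc_trans hlu h1
      have hv₀l : v₀ = l := T.anc_antisymm h2 h3
      exact hul (T.anc_antisymm hlu (hv₀l ▸ h1)).symm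

lemma nbr_eq_univ {T : PhyloTree V X} {lab : V → Set M} {ε : X → X → Set M}
    (hex : Explains T lab ε) {m : M} {y : X} (hempty : MEdges T lab m y = ∅) :
    Nbr ε m y = Set.univ := by
  apply Set.eq_univ_of_forall
  intro x
  by_cases hxy : x = y
  · right; exact hxy
  · left
    refine ⟨hxy, fun hm => ?_⟩
    rw [hex x y hxy m] at hm
    obtain ⟨l, _, u, hedge, hmu⟩ := hm
    have : u ∈ MEdges T lab m y := ⟨hmu, edge_ne_root T hedge, hedge.2.2⟩
    rw [hempty] at this
    exact this

lemma nbr_mem_clusterSet {T : PhyloTree V X} {lab : V → Set M} {ε : X → X → Set M}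
    (hex : Explains T lab ε) (m : M) (y : X) : Nbr ε m y ∈ T.clusterSet := by
  rcases Set.eq_empty_or_nonempty (MEdges T lab m y) with h | h
  · exact ⟨T.root, (nbr_eq_univ hex h).trans T.cluster_root.symm⟩
  · obtain ⟨v₀, h₀, hmin⟩ := exists_min_medge T h
    exact ⟨v₀, nbr_eq_cluster hex h₀ hmin⟩

lemma kr_imp_kelc {X M : Type} [Fintype M] {ε : X → X → Set M} {k : ℕ}
    (hkr : KRestricted ε k) : KELC ε k := by
  obtain ⟨V, T, lab, hex, hbd⟩ := hkr
  intro N hN hNuniv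
  obtain ⟨m₀, y₀, rfl⟩ := hN
  have hne : (MEdges T lab m₀ y₀).Nonempty := by
    rcases Set.eq_empty_or_nonempty (MEdges T lab m₀ y₀) with h | h
    · exact absurd (nbr_eq_univ hex h) hNuniv
    · exact h
  obtain ⟨v₀, h₀, hmin⟩ := exists_min_medge T hne
  have hcl := nbr_eq_cluster hex h₀ hmin
  have hsub : {m : M | ∃ y : X, Nbr ε m₀ y₀ = Nbr ε m y} ⊆ lab v₀ := by
    rintro m ⟨y, hy⟩
    have hne' : (MEdges T lab m y).Nonempty := by
      rcases Set.eq_empty_or_nonempty (MEdges T lab m y) with h | h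
      · exact absurd (hy.trans (nbr_eq_univ hex h)) hNuniv
      · exact h
    obtain ⟨v₁, h₁, hmin₁⟩ := exists_min_medge T hne'
    have hc : T.cluster v₁ = T.cluster v₀ := by
      rw [← nbr_eq_cluster hex h₁ hmin₁, ← hy, hcl]
    have hv := T.cluster_inj hc
    exact hv ▸ h₁.1
  calc {m : M | ∃ y : X, Nbr ε m₀ y₀ = Nbr ε m y}.ncard
      ≤ (lab v₀).ncard := Set.ncard_le_ncard hsub (Set.toFinite _)
    _ ≤ k := hbd v₀ h₀.2.1

lemma kelc_imp_kr {X M : Type} [Fintype M] {ε : X → X → Set M} {k : ℕ}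
    (h : IsFitchMap ε) (hkelc : KELC ε k) : KRestricted ε k := by
  obtain ⟨V, T, lab, hex⟩ := h
  refine ⟨V, T, fun v => lab v ∩ {m : M | ∃ y : X, T.cluster v = Nbr ε m y}, ?_, ?_⟩
  · intro x y hxy m
    rw [hex x y hxy m]
    constructor
    · rintro ⟨l, hlca, u, hedge, hmu⟩
      have humem : u ∈ MEdges T lab m y := ⟨hmu, edge_ne_root T hedge, hedge.2.2⟩
      obtain ⟨v₀, h₀, hmin⟩ := exists_min_medge T ⟨u, humem⟩
      have hanc_uv : T.anc u v₀ := hmin u humem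
      refine ⟨l, hlca, v₀, ⟨T.anc_trans hedge.1 hanc_uv, ?_, h₀.2.2⟩,
        h₀.1, y, (nbr_eq_cluster hex h₀ hmin).symm⟩
      intro heq
      exact hedge.2.1 (T.anc_antisymm hedge.1 (heq ▸ hanc_uv)).symm
    · rintro ⟨l, hlca, u, hedge, hmu, _⟩
      exact ⟨l, hlca, u, hedge, hmu⟩
  · intro v hv
    show (lab v ∩ {m : M | ∃ y : X, T.cluster v = Nbr ε m y}).ncard ≤ k
    rcases Set.eq_empty_or_nonempty {m : M | ∃ y : X, T.cluster v = Nbr ε m y} with hE | hE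
    · have : lab v ∩ {m : M | ∃ y : X, T.cluster v = Nbr ε m y} = ∅ := by
        rw [hE, Set.inter_empty]
      rw [this]
      simp
    · obtain ⟨m₁, y₁, hm₁⟩ := hE
      have hcne : T.cluster v ≠ Set.univ := fun hc => hv (T.eq_root_of_cluster_univ hc)
      have hbound := hkelc (T.cluster v) ⟨m₁, y₁, hm₁⟩ hcne
      calc (lab v ∩ {m : M | ∃ y : X, T.cluster v = Nbr ε m y}).ncard
          ≤ {m : M | ∃ y : X, T.cluster v = Nbr ε m y}.ncard :=
            Set.ncard_le_ncard Set.inter_subset_right (Set.toFinite _)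
        _ ≤ k := hbound

end FitchAux

lemma exists_laminar_tree {X : Type} [Fintype X] [Nonempty X] (H : Set (Set X))
    (hH : HLike H) (huniv : Set.univ ∈ H) (hsing : ∀ x : X, ({x} : Set X) ∈ H)
    (hne : ∀ S ∈ H, S.Nonempty) :
    ∃ T : PhyloTree {S : Set X // S ∈ H} X,
      T.root = ⟨Set.univ, huniv⟩ ∧ ∀ N : {S : Set X // S ∈ H}, T.cluster N = N.1 := by
  classical
  have hfinV : Finite {S : Set X // S ∈ H} := by infer_instance
  -- minimal strict superset
  have key : ∀ N : {S : Set X // S ∈ H}, N.1 ≠ Set.univ →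
      ∃ P : {S : Set X // S ∈ H}, N.1 ⊂ P.1 ∧ ∀ Q ∈ H, N.1 ⊂ Q → P.1 ⊆ Q := by
    intro N hNu
    have hSSne : ({Q | Q ∈ H ∧ N.1 ⊂ Q} : Set (Set X)).Nonempty :=
      ⟨Set.univ, huniv, (Set.ssubset_univ_iff).mpr hNu⟩
    obtain ⟨P, hP, hmin⟩ := Set.exists_min_image {Q | Q ∈ H ∧ N.1 ⊂ Q}
      (fun Q => Q.ncard) (Set.toFinite _) hSSne
    refine ⟨⟨P, hP.1⟩, hP.2, fun Q hQH hQss => ?_⟩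
    rcases hH P hP.1 Q hQH with hc | hc | hc
    · exact (Set.inter_eq_left.mp hc)
    · have hQP : Q ⊆ P := Set.inter_eq_right.mp hc
      have : Q = P := Set.eq_of_subset_of_ncard_le hQP (hmin Q ⟨hQH, hQss⟩) (Set.toFinite _)
      rw [this]
    · exfalso
      obtain ⟨z, hz⟩ := hne N.1 N.2
      have : z ∈ P ∩ Q := ⟨hP.2.1 hz, hQss.1 hz⟩
      rw [hc] at this
      exact this
  have key2 : ∀ N : {S : Set X // S ∈ H}, ∃ P : {S : Set X // S ∈ H},
      (N.1 = Set.univ → P = N) ∧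
      (N.1 ≠ Set.univ → N.1 ⊂ P.1 ∧ ∀ Q ∈ H, N.1 ⊂ Q → P.1 ⊆ Q) := by
    intro N
    by_cases h : N.1 = Set.univ
    · exact ⟨N, fun _ => rfl, fun hn => absurd h hn⟩
    · obtain ⟨P, h1, h2⟩ := key N h
      exact ⟨P, fun hu => absurd hu h, fun _ => ⟨h1, h2⟩⟩
  choose pf hpf1 hpf2 using key2
  have pf_mono : ∀ N, N.1 ⊆ (pf N).1 := by
    intro N
    by_cases h : N.1 = Set.univ
    · rw [hpf1 N h]
    · exact ((hpf2 N h).1).subset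
  have pf_iter_mono : ∀ (n : ℕ) (N), N.1 ⊆ (pf^[n] N).1 := by
    intro n
    induction n with
    | zero => intro N; rfl
    | succ n ih =>
      intro N
      rw [Function.iterate_succ_apply]
      exact (pf_mono N).trans (ih (pf N))
  -- climbing lemma
  have climb : ∀ (k : ℕ) (S N : {S : Set X // S ∈ H}), S.1 ⊆ N.1 →
      (N.1 \ S.1).ncard ≤ k → ∃ n, pf^[n] S = N := by
    intro k
    induction k with
    | zero =>
      intro S N hsub hk
      by_cases heq : S.1 = N.1
      · exact ⟨0, Subtype.ext heq⟩
      · exfalso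
        obtain ⟨z, hzN, hzS⟩ := Set.exists_of_ssubset (ssubset_of_subset_of_ne hsub heq)
        have : 0 < (N.1 \ S.1).ncard :=
          (Set.ncard_pos (Set.toFinite _)).mpr ⟨z, hzN, hzS⟩
        omega
    | succ k ih =>
      intro S N hsub hk
      by_cases heq : S.1 = N.1
      · exact ⟨0, Subtype.ext heq⟩
      · have hSu : S.1 ≠ Set.univ := by
          intro h
          exact heq (h.trans (Set.eq_univ_of_univ_subset (h ▸ hsub)).symm)
        have h2 := hpf2 S hSu
        have hsub2 : (pf S).1 ⊆ N.1 := h2.2 N.1 N.2 (ssubset_of_subset_of_ne hsub heq)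
        obtain ⟨z, hz1, hz2⟩ := Set.exists_of_ssubset h2.1
        have hss : (N.1 \ (pf S).1) ⊂ (N.1 \ S.1) := by
          constructor
          · exact Set.diff_subset_diff_right (pf_mono S)
          · intro hcon
            exact (hcon ⟨hsub2 hz1, hz2⟩).2 hz1
        have hlt := Set.ncard_lt_ncard hss (Set.toFinite _)
        obtain ⟨n, hn⟩ := ih (pf S) N hsub2 (by omega)
        exact ⟨n + 1, by rw [Function.iterate_succ_apply]; exact hn⟩
  -- child existence
  have child : ∀ (N : {S : Set X // S ∈ H}) (x : X), x ∈ N.1 → {x} ≠ N.1 →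
      ∃ C : {S : Set X // S ∈ H}, pf C = N ∧ C ≠ N ∧ x ∈ C.1 := by
    intro N x hx hne1
    have hAne : ({Q | Q ∈ H ∧ x ∈ Q ∧ Q ⊂ N.1} : Set (Set X)).Nonempty :=
      ⟨{x}, hsing x, rfl, ssubset_of_subset_of_ne (Set.singleton_subset_iff.mpr hx) hne1⟩
    obtain ⟨P, hP, hmax⟩ := Set.exists_max_image {Q | Q ∈ H ∧ x ∈ Q ∧ Q ⊂ N.1}
      (fun Q => Q.ncard) (Set.toFinite _) hAne
    have hPu : P ≠ Set.univ := by
      intro h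
      rw [h] at hP
      exact hP.2.2.2 (Set.subset_univ _)
    have h2 := hpf2 ⟨P, hP.1⟩ hPu
    have hsub : (pf ⟨P, hP.1⟩).1 ⊆ N.1 := h2.2 N.1 N.2 hP.2.2
    by_cases heq : (pf ⟨P, hP.1⟩).1 = N.1
    · refine ⟨⟨P, hP.1⟩, Subtype.ext heq, ?_, hP.2.1⟩
      intro hc
      exact hP.2.2.2 (congrArg Subtype.val hc).symm.subset
    · exfalso
      have hmem : (pf ⟨P, hP.1⟩).1 ∈ {Q | Q ∈ H ∧ x ∈ Q ∧ Q ⊂ N.1} :=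
        ⟨(pf ⟨P, hP.1⟩).2, h2.1.subset hP.2.1, ssubset_of_subset_of_ne hsub heq⟩
      have hle := hmax _ hmem
      have hlt := Set.ncard_lt_ncard h2.1 (Set.toFinite _)
      simp only at hle hlt
      omega
  -- degree helper
  have deg : ∀ N : {S : Set X // S ∈ H}, (∀ x : X, ({x} : Set X) ≠ N.1) →
      2 ≤ ({C | pf C = N ∧ C ≠ N} : Set {S : Set X // S ∈ H}).ncard := by
    intro N hns
    obtain ⟨x, hx⟩ := hne N.1 N.2
    obtain ⟨C1, hC11, hC12, hC13⟩ := child N x hx (hns x)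
    have hC1ss : C1.1 ⊂ N.1 :=
      ssubset_of_subset_of_ne (by rw [← hC11]; exact pf_mono C1)
        (fun h => hC12 (Subtype.ext h))
    obtain ⟨y, hyN, hyC⟩ := Set.exists_of_ssubset hC1ss
    obtain ⟨C2, hC21, hC22, hC23⟩ := child N y hyN (hns y)
    have h1 : 1 < ({C | pf C = N ∧ C ≠ N} : Set {S : Set X // S ∈ H}).ncard := by
      rw [Set.one_lt_ncard (Set.toFinite _)]
      refine ⟨C1, ⟨hC11, hC12⟩, C2, ⟨hC21, hC22⟩, fun hcc => ?_⟩
      rw [hcc] at hyC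
      exact hyC hC23
    omega
  -- assemble the tree
  refine ⟨{ fin := hfinV
            root := ⟨Set.univ, huniv⟩
            par := pf
            par_root := hpf1 _ rfl
            reach := ?_
            leaf := fun x => ⟨{x}, hsing x⟩
            leaf_inj := ?_
            leaf_isLeaf := ?_
            leaf_only := ?_
            root_deg := ?_
            inner_deg := ?_ }, rfl, ?_⟩
  · -- reach
    intro N
    obtain ⟨n, hn⟩ := climb ((Set.univ \ N.1).ncard) N ⟨Set.univ, huniv⟩
      (Set.subset_univ _) le_rfl
    exact ⟨n, hn⟩
  · -- leaf_inj
    intro x y hxy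
    have := congrArg Subtype.val hxy
    simpa using this
  · -- leaf_isLeaf
    intro x U hU
    by_cases h : U.1 = Set.univ
    · rw [hpf1 U h] at hU
      exact hU
    · exfalso
      have h2 := (hpf2 U h).1
      rw [hU] at h2
      have hU1 : U.1 ⊆ {x} := h2.subset
      have := (hne U.1 U.2).subset_singleton_iff.mp hU1
      exact h2.ne this
  · -- leaf_only
    intro N hchild
    obtain ⟨x, hx⟩ := hne N.1 N.2
    by_cases h : ({x} : Set X) = N.1
    · exact ⟨x, Subtype.ext h⟩
    · obtain ⟨C, hC, hCne, _⟩ := child N x hx h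
      exact absurd (hchild C hC) hCne
  · -- root_deg
    by_cases hX : ∃ x : X, ({x} : Set X) = Set.univ
    · obtain ⟨x, hx⟩ := hX
      exact Or.inl ⟨x, Subtype.ext hx⟩
    · push_neg at hX
      exact Or.inr (deg ⟨Set.univ, huniv⟩ hX)
  · -- inner_deg
    intro v hvroot hvleaf
    apply deg
    intro x hx
    exact hvleaf ⟨x, Subtype.ext hx⟩
  · -- cluster identity
    intro N
    ext x
    constructor
    · rintro ⟨n, hn⟩
      have := pf_iter_mono n ⟨{x}, hsing x⟩
      rw [hn] at this
      exact this rfl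
    · intro hx
      obtain ⟨n, hn⟩ := climb ((N.1 \ ({x} : Set X)).ncard) ⟨{x}, hsing x⟩ N
        (Set.singleton_subset_iff.mpr hx) le_rfl
      exact ⟨n, hn⟩
/-- for a Fitch map `ε` and `k ≥ 1`: `ε` is `k`-restricted iff every edge
of the ε-tree has label of size at most `k` iff `ε` satisfies the `k`-edge-label
condition. -/
theorem k_restricted_tfae {X M : Type} [Fintype X] [Fintype M] [Nonempty X] [Nonempty M]
    (ε : X → X → Set M) (h : IsFitchMap ε) (k : ℕ) (hk : 1 ≤ k) :
    (KRestricted ε k ↔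
      ∀ (W : Type) (That : PhyloTree W X) (labhat : W → Set M),
        IsEpsTree That labhat ε →
        ∀ v : W, v ≠ That.root → (labhat v).ncard ≤ k) ∧
    (KRestricted ε k ↔ KELC ε k) := by
  classical
  have L1 : KRestricted ε k → KELC ε k := kr_imp_kelc
  have L2 : KELC ε k → KRestricted ε k := kelc_imp_kr h
  have L3 : KELC ε k → ∀ (W : Type) (That : PhyloTree W X) (labhat : W → Set M),
      IsEpsTree That labhat ε → ∀ v : W, v ≠ That.root → (labhat v).ncard ≤ k := by
    intro hkelc W That labhat hEps v hv
    rw [hEps.2 v hv]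
    rcases Set.eq_empty_or_nonempty {m : M | ∃ y : X, That.cluster v = Nbr ε m y} with hE | hE
    · rw [hE]; simp
    · obtain ⟨m₁, y₁, hy₁⟩ := hE
      exact hkelc (That.cluster v) ⟨m₁, y₁, hy₁⟩
        (fun hc => hv (That.eq_root_of_cluster_univ hc))
  have L4 : (∀ (W : Type) (That : PhyloTree W X) (labhat : W → Set M),
      IsEpsTree That labhat ε → ∀ v : W, v ≠ That.root → (labhat v).ncard ≤ k) →
      KELC ε k := by
    intro hrhs
    obtain ⟨V0, T0, lab0, hex⟩ := h
    set H : Set (Set X) := NbrSet ε ∪ {Set.univ} ∪ {S : Set X | ∃ x : X, S = {x}}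
      with hHdef
    have memcl : ∀ S ∈ H, S ∈ T0.clusterSet := by
      rintro S hS
      rcases hS with (hS | hS) | hS
      · obtain ⟨m, y, rfl⟩ := hS
        exact nbr_mem_clusterSet hex m y
      · rw [Set.mem_singleton_iff] at hS
        exact ⟨T0.root, hS.trans T0.cluster_root.symm⟩
      · obtain ⟨x, rfl⟩ := hS
        exact ⟨T0.leaf x, (T0.cluster_leaf x).symm⟩
    have hHL : HLike H := by
      intro P hP Q hQ
      obtain ⟨u, rfl⟩ := memcl P hP
      obtain ⟨v, rfl⟩ := memcl Q hQ
      by_cases hdis : T0.cluster u ∩ T0.cluster v = ∅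
      · exact Or.inr (Or.inr hdis)
      · obtain ⟨x, hxu, hxv⟩ := Set.nonempty_iff_ne_empty.mpr hdis
        rcases T0.anc_comparable hxu hxv with hc | hc
        · exact Or.inr (Or.inl (Set.inter_eq_right.mpr (T0.cluster_subset_of_anc hc)))
        · exact Or.inl (Set.inter_eq_left.mpr (T0.cluster_subset_of_anc hc))
    have huniv' : Set.univ ∈ H := Or.inl (Or.inr rfl)
    have hsing' : ∀ x : X, ({x} : Set X) ∈ H := fun x => Or.inr ⟨x, rfl⟩
    have hne' : ∀ S ∈ H, S.Nonempty := by
      intro S hS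
      obtain ⟨u, rfl⟩ := memcl S hS
      exact T0.cluster_nonempty u
    obtain ⟨That, hroot, hclus⟩ := exists_laminar_tree H hHL huniv' hsing' hne'
    have hEps : IsEpsTree That (fun v => {m : M | ∃ y : X, That.cluster v = Nbr ε m y}) ε := by
      constructor
      · ext S
        constructor
        · rintro ⟨v, rfl⟩
          rw [hclus v]
          exact v.2
        · intro hS
          exact ⟨⟨S, hS⟩, (hclus ⟨S, hS⟩).symm⟩
      · intro v _
        rfl
    intro N hN hNuniv
    have hNH : N ∈ H := Or.inl (Or.inl hN)
    have hvne : (⟨N, hNH⟩ : {S : Set X // S ∈ H}) ≠ That.root := by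
      intro hc
      rw [hroot] at hc
      exact hNuniv (congrArg Subtype.val hc)
    have hbound := hrhs _ That _ hEps ⟨N, hNH⟩ hvne
    have heq : {m : M | ∃ y : X, That.cluster ⟨N, hNH⟩ = Nbr ε m y}
        = {m : M | ∃ y : X, N = Nbr ε m y} := by
      rw [hclus ⟨N, hNH⟩]
    rw [heq] at hbound
    exact hbound
  exact ⟨⟨fun hr => L3 (L1 hr), fun hr => L2 (L4 hr)⟩, L1, L2⟩
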